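/- If τ' ≥ τ with τ, τ' ∈ (0,1), then for any value function V and λ ∈ [0,1), (T_{τ',λ} V)(s) ≥ (T_{τ,λ} V)(s) for all states s, where T_{τ,λ} V = (1−λ) Σ_{n=1}^∞ λ^{n−1} (T_τ)^n V. Consequently the fixed points satisfy V*_{τ',λ}(s) ≥ V*_{τ,λ}(s) for all s. -/

import Mathlib

/-!
Raising the expectile from `τ` to `τ'` raises the one-step operator pointwise, and `T_{τ'}` is
monotone, so `T_τⁿ ≤ T_{τ'}ⁿ` for every `n` and hence `T_{τ,λ} ≤ T_{τ',λ}`. In particular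
`V*_{τ,λ} ≤ T_{τ',λ} V*_{τ,λ}`. A constant shift by `c ≥ 0` lowers every temporal-difference
error by `(1 - γ) c`, so `T_{τ'}`, and with it `T_{τ',λ}`, maps `V + c` below `T V + β c` for
some `β < 1`; iterating from `V*_{τ,λ} ≤ V*_{τ',λ} + c` gives `V*_{τ,λ} ≤ V*_{τ',λ} + βⁿ c`
for all `n`.
-/

open Finset Filter Topology Function

noncomputable section

/-- Half the derivative of the expectile loss `|σ - 𝟙(x < 0)| x²`. -/
def expectileScore (σ x : ℝ) : ℝ := σ * max x 0 + (1 - σ) * min x 0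

lemma expectileScore_mono_left {σ σ' : ℝ} (h : σ ≤ σ') (x : ℝ) :
    expectileScore σ x ≤ expectileScore σ' x := by
  unfold expectileScore
  nlinarith [le_max_right x 0, min_le_right x 0]

-- The increments of `max · 0` and `min · 0` are nonnegative and add up to `y - x`.
lemma min_mul_sub_le_expectileScore_sub (σ : ℝ) {x y : ℝ} (h : x ≤ y) :
    min σ (1 - σ) * (y - x) ≤ expectileScore σ y - expectileScore σ x := by
  unfold expectileScore
  nlinarith [max_add_min y 0, max_add_min x 0, max_le_max_right 0 h, min_le_min_right 0 h,
    min_le_left σ (1 - σ), min_le_right σ (1 - σ)]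

lemma expectileScore_sub_le_max_mul_sub (σ : ℝ) {x y : ℝ} (h : x ≤ y) :
    expectileScore σ y - expectileScore σ x ≤ max σ (1 - σ) * (y - x) := by
  unfold expectileScore
  nlinarith [max_add_min y 0, max_add_min x 0, max_le_max_right 0 h, min_le_min_right 0 h,
    le_max_left σ (1 - σ), le_max_right σ (1 - σ)]

lemma sum_sum_mul_le_add {ι κ : Type*} [Fintype ι] [Fintype κ] {w g h : ι → κ → ℝ} {c : ℝ}
    (hw0 : ∀ i j, 0 ≤ w i j) (hw1 : ∑ i, ∑ j, w i j = 1) (hgh : ∀ i j, g i j ≤ h i j + c) :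
    ∑ i, ∑ j, w i j * g i j ≤ ∑ i, ∑ j, w i j * h i j + c :=
  calc ∑ i, ∑ j, w i j * g i j ≤ ∑ i, ∑ j, w i j * (h i j + c) := by
        gcongr with i _ j _
        exacts [hw0 i j, hgh i j]
    _ = ∑ i, ∑ j, w i j * h i j + c := by
        simp only [mul_add, sum_add_distrib, ← sum_mul, hw1, one_mul]

section ConstShifts

variable {S : Type*}

def ContractsConstShifts (F : (S → ℝ) → S → ℝ) (β : ℝ) : Prop :=
  ∀ (V : S → ℝ) (c : ℝ), 0 ≤ c → F (fun s => V s + c) ≤ fun s => F V s + β * c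

lemma ContractsConstShifts.iterate {T : (S → ℝ) → S → ℝ} {β : ℝ} (h : ContractsConstShifts T β)
    (hT : Monotone T) (hβ : 0 ≤ β) (n : ℕ) : ContractsConstShifts T^[n] (β ^ n) := by
  induction n with
  | zero => intro V c _ s; simp
  | succ n ih =>
    intro V c hc s
    calc T^[n] (T fun s => V s + c) s ≤ T^[n] (fun s => T V s + β * c) s :=
          hT.iterate n (h V c hc) s
      _ ≤ T^[n] (T V) s + β ^ n * (β * c) := ih (T V) _ (mul_nonneg hβ hc) s
      _ = T^[n] (T V) s + β ^ (n + 1) * c := by ring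

lemma le_of_le_apply_of_isFixedPt [Finite S] {F : (S → ℝ) → S → ℝ} {κ : ℝ} {U V : S → ℝ}
    (hF : Monotone F) (hFκ : ContractsConstShifts F κ) (hκ0 : 0 ≤ κ) (hκ1 : κ < 1)
    (hU : U ≤ F U) (hV : IsFixedPt F V) : U ≤ V := by
  obtain ⟨M, hM⟩ := Finite.exists_le fun s => U s - V s
  have hbound : ∀ n : ℕ, U ≤ fun s => V s + κ ^ n * max M 0 := by
    intro n
    induction n with
    | zero => intro s; simp only [pow_zero, one_mul]; linarith [hM s, le_max_left M 0]
    | succ n ih =>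
      intro s
      calc U s ≤ F U s := hU s
        _ ≤ F (fun s => V s + κ ^ n * max M 0) s := hF ih s
        _ ≤ F V s + κ * (κ ^ n * max M 0) := hFκ V _ (by positivity) s
        _ = V s + κ ^ (n + 1) * max M 0 := by rw [hV.eq]; ring
  intro s
  have hlim : Tendsto (fun n : ℕ => V s + κ ^ n * max M 0) atTop (𝓝 (V s)) := by
    simpa using tendsto_const_nhds.add
      ((tendsto_pow_atTop_nhds_zero_of_lt_one hκ0 hκ1).mul_const (max M 0))
  exact ge_of_tendsto' hlim fun n => hbound n s

end ConstShifts

section LambdaReturn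

variable {S : Type*} {lam : ℝ} {T T' : (S → ℝ) → S → ℝ}

def lambdaReturn (lam : ℝ) (T : (S → ℝ) → S → ℝ) (V : S → ℝ) : S → ℝ :=
  fun s => (1 - lam) * ∑' n : ℕ, lam ^ n * T^[n + 1] V s

lemma lambdaReturn_le_lambdaReturn {V V' : S → ℝ} (hlam0 : 0 ≤ lam) (hlam1 : lam ≤ 1)
    (h : ∀ n, T^[n + 1] V ≤ T'^[n + 1] V')
    (hs : ∀ s, Summable fun n : ℕ => lam ^ n * T^[n + 1] V s)
    (hs' : ∀ s, Summable fun n : ℕ => lam ^ n * T'^[n + 1] V' s) :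
    lambdaReturn lam T V ≤ lambdaReturn lam T' V' := fun s =>
  mul_le_mul_of_nonneg_left
    ((hs s).tsum_le_tsum (fun n => mul_le_mul_of_nonneg_left (h n s) (pow_nonneg hlam0 n))
      (hs' s))
    (sub_nonneg.2 hlam1)

lemma lambdaReturn_monotone (hT : Monotone T) (hlam0 : 0 ≤ lam) (hlam1 : lam ≤ 1)
    (hs : ∀ V s, Summable fun n : ℕ => lam ^ n * T^[n + 1] V s) :
    Monotone (lambdaReturn lam T) := fun _ _ hVW =>
  lambdaReturn_le_lambdaReturn hlam0 hlam1 (fun n => hT.iterate (n + 1) hVW) (hs _) (hs _)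

-- The weights `(1 - λ) λⁿ` sum to one, and each `β ^ (n + 1)` is at most `β`.
lemma lambdaReturn_contractsConstShifts {β : ℝ} (hT : Monotone T)
    (h : ContractsConstShifts T β) (hβ0 : 0 ≤ β) (hβ1 : β ≤ 1) (hlam0 : 0 ≤ lam)
    (hlam1 : lam < 1) (hs : ∀ V s, Summable fun n : ℕ => lam ^ n * T^[n + 1] V s) :
    ContractsConstShifts (lambdaReturn lam T) β := by
  intro V c hc s
  have hgeom : Summable fun n : ℕ => lam ^ n * (β * c) :=
    (summable_geometric_of_lt_one hlam0 hlam1).mul_right _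
  have hiter (n : ℕ) : T^[n + 1] (fun s => V s + c) s ≤ T^[n + 1] V s + β * c :=
    (h.iterate hT hβ0 (n + 1) V c hc s).trans
      (by dsimp only; gcongr; exact pow_le_of_le_one hβ0 hβ1 n.succ_ne_zero)
  calc lambdaReturn lam T (fun s => V s + c) s
      ≤ (1 - lam) * ∑' n : ℕ, (lam ^ n * T^[n + 1] V s + lam ^ n * (β * c)) := by
        refine mul_le_mul_of_nonneg_left ((hs _ s).tsum_le_tsum (fun n => ?_)
          ((hs V s).add hgeom)) (by linarith)
        rw [← mul_add]
        exact mul_le_mul_of_nonneg_left (hiter n) (pow_nonneg hlam0 n)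
    _ = lambdaReturn lam T V s + β * c := by
        rw [(hs V s).tsum_add hgeom, tsum_mul_right, tsum_geometric_of_lt_one hlam0 hlam1,
          lambdaReturn, mul_add]
        field_simp [(by linarith : (1 - lam) ≠ 0)]

end LambdaReturn

section ExpectileBellman

variable {S A : Type*} [Fintype S] [Fintype A] {w R : S → A → S → ℝ} {γ α σ : ℝ}

/-- `w s a s'` plays the role of `π(a | s) P(s' | s, a)`: the operator is one gradient step
of size `α` on the expectile loss of the temporal-difference errors. -/
def expectileBellman (w R : S → A → S → ℝ) (γ α σ : ℝ) (V : S → ℝ) : S → ℝ :=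
  fun s => V s + 2 * α * ∑ a, ∑ s', w s a s' * expectileScore σ (R s a s' + γ * V s' - V s)

lemma expectileBellman_le_expectileBellman {σ' : ℝ} (hw0 : ∀ s a s', 0 ≤ w s a s')
    (hα0 : 0 ≤ α) (h : σ ≤ σ') : expectileBellman w R γ α σ ≤ expectileBellman w R γ α σ' := by
  intro V s
  unfold expectileBellman
  gcongr with a _ s' _
  exacts [hw0 s a s', expectileScore_mono_left h _]

lemma expectileBellman_monotone (hw0 : ∀ s a s', 0 ≤ w s a s')
    (hw1 : ∀ s, ∑ a, ∑ s', w s a s' = 1) (hγ : 0 ≤ γ) (hσ0 : 0 ≤ σ) (hσ1 : σ ≤ 1)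
    (hα0 : 0 ≤ α) (hα : 2 * α * max σ (1 - σ) ≤ 1) :
    Monotone (expectileBellman w R γ α σ) := by
  intro V W hVW s
  have hd : 0 ≤ W s - V s := sub_nonneg.2 (hVW s)
  have hM : 0 ≤ max σ (1 - σ) := le_max_of_le_left hσ0
  -- raising `V` to `W` lowers each TD error by at most `W s - V s`
  have hterm (a : A) (s' : S) : expectileScore σ (R s a s' + γ * V s' - V s) ≤
      expectileScore σ (R s a s' + γ * W s' - W s) + max σ (1 - σ) * (W s - V s) := by
    rcases le_total (R s a s' + γ * V s' - V s) (R s a s' + γ * W s' - W s) with h | h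
    · have := min_mul_sub_le_expectileScore_sub σ h
      nlinarith [le_min hσ0 (sub_nonneg.2 hσ1), mul_nonneg hM hd]
    · have := expectileScore_sub_le_max_mul_sub σ h
      nlinarith [mul_nonneg hM (mul_nonneg hγ (sub_nonneg.2 (hVW s')))]
  have := mul_le_mul_of_nonneg_left (sum_sum_mul_le_add (hw0 s) (hw1 s) hterm)
    (by positivity : 0 ≤ 2 * α)
  simp only [expectileBellman]
  nlinarith [mul_nonneg (mul_nonneg (by positivity : 0 ≤ 2 * α) hM) hd]

lemma expectileBellman_contractsConstShifts (hw0 : ∀ s a s', 0 ≤ w s a s')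
    (hw1 : ∀ s, ∑ a, ∑ s', w s a s' = 1) (hγ : γ ≤ 1) (hα0 : 0 ≤ α) :
    ContractsConstShifts (expectileBellman w R γ α σ) (1 - 2 * α * min σ (1 - σ) * (1 - γ)) := by
  intro V c hc s
  have hterm (a : A) (s' : S) :
      expectileScore σ (R s a s' + γ * (V s' + c) - (V s + c)) ≤
        expectileScore σ (R s a s' + γ * V s' - V s) + -(min σ (1 - σ) * ((1 - γ) * c)) := by
    have h := min_mul_sub_le_expectileScore_sub σ
      (x := R s a s' + γ * (V s' + c) - (V s + c)) (y := R s a s' + γ * V s' - V s)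
      (by nlinarith)
    rw [show R s a s' + γ * V s' - V s - (R s a s' + γ * (V s' + c) - (V s + c))
      = (1 - γ) * c by ring] at h
    linarith
  have := mul_le_mul_of_nonneg_left (sum_sum_mul_le_add (hw0 s) (hw1 s) hterm)
    (by positivity : 0 ≤ 2 * α)
  simp only [expectileBellman]
  nlinarith

end ExpectileBellman

theorem multistep_monotone_in_tau_general {S A : Type*}
    [Fintype S] [Fintype A]
    (pol : S → A → ℝ) (P : S → A → S → ℝ) (R : S → A → S → ℝ) (γ α τ τ' lam : ℝ)
    (hpol0 : ∀ s a, 0 ≤ pol s a) (hpol1 : ∀ s, ∑ a, pol s a = 1)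
    (hP0 : ∀ s a s', 0 ≤ P s a s') (hP1 : ∀ s a, ∑ s', P s a s' = 1)
    (hγ0 : 0 ≤ γ) (hγ1 : γ < 1)
    (hτ'0 : 0 < τ') (hτ'1 : τ' < 1) (hττ' : τ ≤ τ')
    (hα0 : 0 < α) (hα : 2 * α * max τ' (1 - τ) ≤ 1)
    (hlam0 : 0 ≤ lam) (hlam1 : lam < 1)
    (Tτ Tτ' Tlam Tlam' : (S → ℝ) → (S → ℝ))
    (hTτ : ∀ V s, Tτ V s =
      V s + 2 * α * ∑ a, ∑ s', pol s a * P s a s' *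
        (τ * max (R s a s' + γ * V s' - V s) 0
          + (1 - τ) * min (R s a s' + γ * V s' - V s) 0))
    (hTτ' : ∀ V s, Tτ' V s =
      V s + 2 * α * ∑ a, ∑ s', pol s a * P s a s' *
        (τ' * max (R s a s' + γ * V s' - V s) 0
          + (1 - τ') * min (R s a s' + γ * V s' - V s) 0))
    (hsum : ∀ (V : S → ℝ) (s : S), Summable (fun n : ℕ => lam ^ n * (Tτ^[n + 1] V s)))
    (hsum' : ∀ (V : S → ℝ) (s : S), Summable (fun n : ℕ => lam ^ n * (Tτ'^[n + 1] V s)))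
    (hTlam : ∀ V s, Tlam V s = (1 - lam) * ∑' n : ℕ, lam ^ n * (Tτ^[n + 1] V s))
    (hTlam' : ∀ V s, Tlam' V s = (1 - lam) * ∑' n : ℕ, lam ^ n * (Tτ'^[n + 1] V s))
    (Vlam Vlam' : S → ℝ) (hfix : Tlam Vlam = Vlam) (hfix' : Tlam' Vlam' = Vlam') :
    (∀ (V : S → ℝ) (s : S), Tlam V s ≤ Tlam' V s) ∧ (∀ s, Vlam s ≤ Vlam' s) := by
  set w : S → A → S → ℝ := fun s a s' => pol s a * P s a s'
  have hw0 (s a s') : 0 ≤ w s a s' := mul_nonneg (hpol0 s a) (hP0 s a s')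
  have hw1 (s) : ∑ a, ∑ s', w s a s' = 1 := by simp [w, ← mul_sum, hP1, hpol1]
  obtain rfl : Tlam = lambdaReturn lam Tτ := funext₂ hTlam
  obtain rfl : Tlam' = lambdaReturn lam Tτ' := funext₂ hTlam'
  obtain rfl : Tτ = expectileBellman w R γ α τ := funext₂ hTτ
  obtain rfl : Tτ' = expectileBellman w R γ α τ' := funext₂ hTτ'
  set β := 1 - 2 * α * min τ' (1 - τ') * (1 - γ)
  have hm : 0 < 2 * α * min τ' (1 - τ') := mul_pos (by positivity) (lt_min hτ'0 (by linarith))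
  have hβ0 : 0 ≤ β := by
    have : 2 * α * min τ' (1 - τ') ≤ 2 * α * max τ' (1 - τ) := by
      gcongr
      exact (min_le_left _ _).trans (le_max_left _ _)
    nlinarith
  have hβ1 : β < 1 := by nlinarith
  have hmono := expectileBellman_monotone (R := R) hw0 hw1 hγ0 hτ'0.le hτ'1.le hα0.le
    (hα.trans' (by gcongr))
  have hcomp : lambdaReturn lam (expectileBellman w R γ α τ) ≤
      lambdaReturn lam (expectileBellman w R γ α τ') := fun V =>
    lambdaReturn_le_lambdaReturn hlam0 hlam1.le
      (fun n => hmono.le_iterate_of_le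
        (expectileBellman_le_expectileBellman hw0 hα0.le hττ') (n + 1) V)
      (hsum V) (hsum' V)
  have hshift := lambdaReturn_contractsConstShifts hmono
    (expectileBellman_contractsConstShifts hw0 hw1 hγ1.le hα0.le) hβ0 hβ1.le hlam0 hlam1 hsum'
  exact ⟨hcomp, le_of_le_apply_of_isFixedPt (lambdaReturn_monotone hmono hlam0 hlam1.le hsum')
    hshift hβ0 hβ1 (hfix.symm.trans_le (hcomp Vlam)) hfix'⟩

/-- If `τ' ≥ τ` then `(T_{τ',λ} V)(s) ≥ (T_{τ,λ} V)(s)` for every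
value function `V` and state `s`, and consequently the fixed points satisfy
`V*_{τ',λ}(s) ≥ V*_{τ,λ}(s)` for all `s`. -/
theorem multistep_monotone_in_tau {S A : Type*}
    [Fintype S] [Nonempty S] [Fintype A] [Nonempty A]
    (pol : S → A → ℝ) (P : S → A → S → ℝ) (R : S → A → S → ℝ) (γ α τ τ' lam : ℝ)
    (hpol0 : ∀ s a, 0 ≤ pol s a) (hpol1 : ∀ s, ∑ a, pol s a = 1)
    (hP0 : ∀ s a s', 0 ≤ P s a s') (hP1 : ∀ s a, ∑ s', P s a s' = 1)
    (hγ0 : 0 ≤ γ) (hγ1 : γ < 1)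
    (hτ0 : 0 < τ) (hτ1 : τ < 1) (hτ'0 : 0 < τ') (hτ'1 : τ' < 1) (hττ' : τ ≤ τ')
    (hα0 : 0 < α) (hα : 2 * α * max τ' (1 - τ) ≤ 1)
    (hlam0 : 0 ≤ lam) (hlam1 : lam < 1)
    (Tτ Tτ' Tlam Tlam' : (S → ℝ) → (S → ℝ))
    (hTτ : ∀ V s, Tτ V s =
      V s + 2 * α * ∑ a, ∑ s', pol s a * P s a s' *
        (τ * max (R s a s' + γ * V s' - V s) 0
          + (1 - τ) * min (R s a s' + γ * V s' - V s) 0))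
    (hTτ' : ∀ V s, Tτ' V s =
      V s + 2 * α * ∑ a, ∑ s', pol s a * P s a s' *
        (τ' * max (R s a s' + γ * V s' - V s) 0
          + (1 - τ') * min (R s a s' + γ * V s' - V s) 0))
    (hsum : ∀ (V : S → ℝ) (s : S), Summable (fun n : ℕ => lam ^ n * (Tτ^[n + 1] V s)))
    (hsum' : ∀ (V : S → ℝ) (s : S), Summable (fun n : ℕ => lam ^ n * (Tτ'^[n + 1] V s)))
    (hTlam : ∀ V s, Tlam V s = (1 - lam) * ∑' n : ℕ, lam ^ n * (Tτ^[n + 1] V s))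
    (hTlam' : ∀ V s, Tlam' V s = (1 - lam) * ∑' n : ℕ, lam ^ n * (Tτ'^[n + 1] V s))
    (Vlam Vlam' : S → ℝ) (hfix : Tlam Vlam = Vlam) (hfix' : Tlam' Vlam' = Vlam') :
    (∀ (V : S → ℝ) (s : S), Tlam V s ≤ Tlam' V s) ∧ (∀ s, Vlam s ≤ Vlam' s) :=
  multistep_monotone_in_tau_general pol P R γ α τ τ' lam hpol0 hpol1 hP0 hP1 hγ0 hγ1 hτ'0 hτ'1 hττ'
    hα0 hα hlam0 hlam1 Tτ Tτ' Tlam Tlam' hTτ hTτ' hsum hsum' hTlam hTlam' Vlam Vlam' hfix hfix'
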